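/- G_{s,p}(a) admits the product formula G_{s,p}(a) = Π_{j=0}^{s−1} exp( Σ_{i=0}^{s−j−1} (ζ_{p^{s−j−i}}−1)(p − 1 − ζ_{p^{s−j−i}} − ζ_{p^{s−j−i}}^2 − ⋯ − ζ_{p^{s−j−i}}^{p−1}) a_j^{p^i}/p^i ). -/

import Mathlib

open PowerSeries Classical

/-- Formal exponential `exp f = Σ_n f^n / n!` of a one-variable power series. -/
noncomputable def pexp {K : Type} [Field K] (f : PowerSeries K) : PowerSeries K :=
  PowerSeries.mk fun d =>
    ∑ n ∈ Finset.range (d + 1), PowerSeries.coeff d (f ^ n) / (Nat.factorial n : K)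

/-- Substitution `f(a)` of a multivariate power series `a` (with zero constant term) into a
one-variable power series `f`. -/
noncomputable def substOne {K : Type} [Field K] {σ : Type}
    (a : MvPowerSeries σ K) (f : PowerSeries K) : MvPowerSeries σ K :=
  fun d => ∑ n ∈ Finset.range (d.sum (fun _ k => k) + 1),
    PowerSeries.coeff n f * MvPowerSeries.coeff d (a ^ n)

/-- `E_{j,p}(t) = exp (Σ_{i<j} (ζ_{p^{j-i}} - 1) t^{p^i}/p^i)`, with `ζ_{p^r} = ζ^{p^{s-r}}`. -/
noncomputable def Esingle (p s : ℕ) {K : Type} [Field K] (ζ : K) (j : ℕ) :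
    PowerSeries K :=
  pexp (∑ i ∈ Finset.range j,
    (PowerSeries.monomial (p ^ i)) ((ζ ^ p ^ (s - j + i) - 1) / ((p : K) ^ i)))

/-- `E_{n,p}(a) = Π_{i<n} E_{n-i,p}(a_i)` on the first `n` components of a Witt vector. -/
noncomputable def EW (p s : ℕ) {K : Type} [Field K] (ζ : K) {σ : Type} (n : ℕ)
    (a : WittVector p (MvPowerSeries σ K)) [Fact p.Prime] : MvPowerSeries σ K :=
  ∏ i ∈ Finset.range n, substOne (a.coeff i) (Esingle p s ζ (n - i))

/-- `G_{s,p}(a) = E_{s,p}(p·a) / E_{s-1,p}(a)`. -/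
noncomputable def GW (p s : ℕ) {K : Type} [Field K] (ζ : K) {σ : Type}
    (a : WittVector p (MvPowerSeries σ K)) [Fact p.Prime] : MvPowerSeries σ K :=
  EW p s ζ s (p • a) * (EW p s ζ (s - 1) a)⁻¹

/-! Every factor is an exponential `expOf g = exp ∘ g` of a series `g` without constant term, and
`expOf (g + h) = expOf g * expOf h`: the coefficients up to `d` only see the quotient by the ideal of
series vanishing at all exponents `≤ d`, where `g` and `h` are nilpotent and the exponential of
nilpotent elements is additive. Collecting the exponents along the diagonals `m = i + k` turns the
exponent of `E_{n,p}(a)` into `Σ_{m<n} (ζ_{p^{n-m}} - 1) w_m(a) / p^m`, with `w_m` the ghost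
components. As `w_m(p a) = p w_m(a)` and `ζ^{p^s} = 1`, the exponent of `G_{s,p}(a)` is
`Σ_{m<s} (p (η_m - 1) - (η_m^p - 1)) w_m(a) / p^m` with `η_m = ζ^{p^m}`, and the geometric sum gives
`p (η - 1) - (η^p - 1) = (η - 1)(p - 1 - η - ⋯ - η^{p-1})`. -/

open Finset

namespace MvPowerSeries

variable {σ R : Type*} [CommRing R]

theorem coeff_subst_eq_sum_range {a : MvPowerSeries σ R} (ha : constantCoeff a = 0)
    (f : R⟦X⟧) {d : σ →₀ ℕ} {N : ℕ} (hN : d.degree < N) :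
    coeff d (f.subst a) = ∑ n ∈ range N, PowerSeries.coeff n f * coeff d (a ^ n) := by
  rw [PowerSeries.coeff_subst (.of_constantCoeff_zero ha)]
  simp_rw [smul_eq_mul]
  refine finsum_eq_sum_of_support_subset _ fun n hn => mem_range.mpr ?_
  by_contra! hNn
  refine hn (mul_eq_zero_of_right _ (coeff_of_lt_order ?_))
  exact (Nat.cast_lt.mpr (hN.trans_le hNn)).trans_le (le_order_pow_of_constantCoeff_eq_zero n ha)

variable (σ R) in
noncomputable def truncIdeal (d : σ →₀ ℕ) : Ideal (MvPowerSeries σ R) :=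
  (LinearTopology.basis σ R (⊥, d)).asIdeal

theorem mem_truncIdeal {d : σ →₀ ℕ} {f : MvPowerSeries σ R} :
    f ∈ truncIdeal σ R d ↔ ∀ e ≤ d, coeff e f = 0 := by
  simp [truncIdeal, TwoSidedIdeal.mem_asIdeal, LinearTopology.mem_basis_iff]

theorem pow_mem_truncIdeal {g : MvPowerSeries σ R} (hg : constantCoeff g = 0) (d : σ →₀ ℕ) :
    g ^ (d.degree + 1) ∈ truncIdeal σ R d :=
  mem_truncIdeal.mpr fun _ he => coeff_of_lt_order <|
    (Nat.cast_lt.mpr (Nat.lt_succ_of_le (Finsupp.degree_mono he))).trans_le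
      (le_order_pow_of_constantCoeff_eq_zero _ hg)

theorem isNilpotent_mk_truncIdeal {g : MvPowerSeries σ R} (hg : constantCoeff g = 0)
    (d : σ →₀ ℕ) : IsNilpotent (Ideal.Quotient.mk (truncIdeal σ R d) g) :=
  ⟨_, by rw [← map_pow, Ideal.Quotient.eq_zero_iff_mem]; exact pow_mem_truncIdeal hg d⟩

variable [Algebra ℚ R]

/-- `exp g`; a junk value unless the constant coefficient of `g` is nilpotent. -/
noncomputable def expOf (g : MvPowerSeries σ R) : MvPowerSeries σ R :=
  (exp R).subst g

theorem expOf_sub_sum_mem_truncIdeal {g : MvPowerSeries σ R} (hg : constantCoeff g = 0)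
    (d : σ →₀ ℕ) :
    expOf g - ∑ n ∈ range (d.degree + 1), (n.factorial : ℚ)⁻¹ • g ^ n ∈ truncIdeal σ R d := by
  refine mem_truncIdeal.mpr fun e he => ?_
  rw [map_sub, expOf, coeff_subst_eq_sum_range hg _ (Nat.lt_succ_of_le (Finsupp.degree_mono he)),
    map_sum, sub_eq_zero]
  refine sum_congr rfl fun n _ => ?_
  rw [coeff_exp, map_rat_smul, Algebra.smul_def, one_div]

theorem mk_expOf {g : MvPowerSeries σ R} (hg : constantCoeff g = 0) (d : σ →₀ ℕ) :
    Ideal.Quotient.mk (truncIdeal σ R d) (expOf g) =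
      IsNilpotent.exp (Ideal.Quotient.mk _ g) := by
  rw [IsNilpotent.exp_eq_sum (k := d.degree + 1),
    Ideal.Quotient.eq.mpr (expOf_sub_sum_mem_truncIdeal hg d)]
  · simp [map_sum, map_rat_smul]
  · rw [← map_pow, Ideal.Quotient.eq_zero_iff_mem]
    exact pow_mem_truncIdeal hg d

theorem expOf_add {g h : MvPowerSeries σ R} (hg : constantCoeff g = 0)
    (hh : constantCoeff h = 0) : expOf (g + h) = expOf g * expOf h := by
  ext d
  rw [← sub_eq_zero, ← map_sub]
  refine mem_truncIdeal.mp ?_ d le_rfl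
  rw [← Ideal.Quotient.eq, map_mul, mk_expOf (by rw [map_add, hg, hh, add_zero]), mk_expOf hg,
    mk_expOf hh, map_add]
  exact IsNilpotent.exp_add_of_commute (Commute.all _ _) (isNilpotent_mk_truncIdeal hg d)
    (isNilpotent_mk_truncIdeal hh d)

theorem expOf_zero : expOf (0 : MvPowerSeries σ R) = 1 := by
  simp [expOf, PowerSeries.subst_zero_eq_C_constantCoeff, constantCoeff_exp]

theorem expOf_sum {ι : Type*} (t : Finset ι) {f : ι → MvPowerSeries σ R}
    (hf : ∀ i ∈ t, constantCoeff (f i) = 0) :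
    expOf (∑ i ∈ t, f i) = ∏ i ∈ t, expOf (f i) := by
  induction t using Finset.cons_induction with
  | empty => exact expOf_zero
  | cons i t hi ih =>
    have ht : ∀ j ∈ t, constantCoeff (f j) = 0 := fun j hj => hf j (mem_cons_of_mem hj)
    rw [sum_cons, prod_cons,
      expOf_add (hf i (mem_cons_self i t)) (by rw [map_sum]; exact sum_eq_zero ht), ih ht]

theorem inv_expOf {K : Type*} [Field K] [CharZero K] {g : MvPowerSeries σ K}
    (hg : constantCoeff g = 0) : (expOf g)⁻¹ = expOf (-g) := by
  have h : expOf (-g) * expOf g = 1 := by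
    rw [← expOf_add (by rw [map_neg, hg, neg_zero]) hg, neg_add_cancel, expOf_zero]
  rwa [MvPowerSeries.inv_eq_iff_mul_eq_one
    (right_ne_zero_of_mul_eq_one (by rw [← map_mul, h, map_one]))]

end MvPowerSeries

section Substitution

variable {K : Type} [Field K] {σ : Type}

theorem substOne_eq_subst {a : MvPowerSeries σ K} (ha : MvPowerSeries.constantCoeff a = 0)
    (f : K⟦X⟧) : substOne a f = f.subst a := by
  ext d
  exact (MvPowerSeries.coeff_subst_eq_sum_range ha f (Nat.lt_succ_self _)).symm

theorem pexp_eq_expOf [CharZero K] {f : K⟦X⟧} (hf : constantCoeff f = 0) :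
    pexp f = MvPowerSeries.expOf f := by
  ext e
  rw [pexp, coeff_mk, coeff_def (s := Finsupp.single () e) (by simp), MvPowerSeries.expOf,
    MvPowerSeries.coeff_subst_eq_sum_range hf _ (by simp : (Finsupp.single () e).degree < e + 1)]
  refine sum_congr rfl fun n _ => ?_
  rw [coeff_exp, ← coeff_def (s := Finsupp.single () e) (n := e) (by simp)]
  simp [div_eq_inv_mul]

theorem substOne_pexp_sum_monomial [CharZero K] {b : MvPowerSeries σ K}
    (hb : MvPowerSeries.constantCoeff b = 0) {q : ℕ → ℕ} (hq : ∀ k, q k ≠ 0) (γ : ℕ → K)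
    (n : ℕ) :
    substOne b (pexp (∑ k ∈ range n, monomial (q k) (γ k))) =
      MvPowerSeries.expOf (∑ k ∈ range n, γ k • b ^ q k) := by
  have h0 : constantCoeff (∑ k ∈ range n, monomial (q k) (γ k)) = 0 := by
    simp [← coeff_zero_eq_constantCoeff_apply, coeff_monomial, Ne.symm (hq _)]
  have hb' : HasSubst b := .of_constantCoeff_zero hb
  rw [pexp_eq_expOf h0, substOne_eq_subst hb, MvPowerSeries.expOf, MvPowerSeries.expOf,
    subst_comp_subst_apply (.of_constantCoeff_zero' h0) hb', ← coe_substAlgHom hb', map_sum]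
  congr 1
  refine sum_congr rfl fun k _ => ?_
  have hmon : monomial (q k) (γ k) = γ k • (X : K⟦X⟧) ^ q k := by
    rw [PowerSeries.X_pow_eq, ← map_smul, smul_eq_mul, mul_one]
  rw [hmon, map_smul, map_pow, PowerSeries.substAlgHom_X]

end Substitution

namespace WittVector

theorem apply_coeff_nsmul_eq_zero {p : ℕ} [Fact p.Prime] {R S : Type*} [CommRing R] [CommRing S]
    (f : R →+* S) {x : WittVector p R} (hx : ∀ i, f (x.coeff i) = 0) (n i : ℕ) :
    f ((n • x).coeff i) = 0 := by
  have hx0 : WittVector.map f x = 0 := ext fun i => by rw [map_coeff, hx, zero_coeff]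
  rw [← map_coeff, map_nsmul, hx0, smul_zero, zero_coeff]

theorem apply_ghostComponent_eq_zero {p : ℕ} [Fact p.Prime] {R S : Type*} [CommRing R]
    [CommRing S] (f : R →+* S) {x : WittVector p R} (hx : ∀ i, f (x.coeff i) = 0) (m : ℕ) :
    f (ghostComponent m x) = 0 := by
  simp [ghostComponent_apply, aeval_wittPolynomial, hx, (Fact.out : p.Prime).ne_zero]

theorem sum_sum_smul_pow_eq_sum_smul_ghostComponent {p : ℕ} [Fact p.Prime] {K A : Type*}
    [Field K] [CharZero K] [CommRing A] [Algebra K A] (x : WittVector p A) (c : ℕ → K) (n : ℕ) :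
    ∑ i ∈ range n, ∑ k ∈ range (n - i), (c (i + k) / (p : K) ^ k) • x.coeff i ^ p ^ k =
      ∑ m ∈ range n, (c m / (p : K) ^ m) • ghostComponent m x := by
  rw [← sum_range_diag_flip]
  refine sum_congr rfl fun m _ => ?_
  rw [ghostComponent_apply, aeval_wittPolynomial, smul_sum]
  refine sum_congr rfl fun i hi => ?_
  have hp : (p : K) ≠ 0 := Nat.cast_ne_zero.mpr (Fact.out : p.Prime).ne_zero
  rw [Nat.add_sub_cancel' (Nat.le_of_lt_succ (mem_range.mp hi)),
    show (p : A) ^ i = algebraMap K A ((p : K) ^ i) by simp, ← Algebra.smul_def, smul_smul]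
  congr 1
  rw [div_mul_eq_mul_div, div_eq_div_iff (pow_ne_zero _ hp) (pow_ne_zero _ hp), mul_assoc,
    ← pow_add, Nat.add_sub_cancel' (Nat.le_of_lt_succ (mem_range.mp hi))]

end WittVector

theorem sub_one_mul_sub_sum_Icc_pow {R : Type*} [CommRing R] (η : R) {p : ℕ} (hp : 1 ≤ p) :
    (η - 1) * ((p : R) - 1 - ∑ t ∈ Icc 1 (p - 1), η ^ t) = p * (η - 1) - (η ^ p - 1) := by
  have h : ∑ t ∈ range p, η ^ t = 1 + ∑ t ∈ Icc 1 (p - 1), η ^ t := by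
    rw [range_eq_Ico, sum_eq_sum_Ico_succ_bot hp, pow_zero, ← Ico_add_one_right_eq_Icc, Nat.sub_add_cancel hp]
  linear_combination (η - 1) * h - geom_sum_mul η p

theorem sum_smul_nsmul_sub_sum_smul_eq_sum_smul {K M : Type*} [Field K] [AddCommGroup M]
    [Module K M] {p s : ℕ} (hp : 1 ≤ p) (hs : 1 ≤ s) {ζ : K} (hζ : ζ ^ p ^ s = 1) (w : ℕ → M) :
    ∑ m ∈ range s, ((ζ ^ p ^ m - 1) / (p : K) ^ m) • (p • w m) -
        ∑ m ∈ range (s - 1), ((ζ ^ p ^ (m + 1) - 1) / (p : K) ^ m) • w m =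
      ∑ m ∈ range s, ((ζ ^ p ^ m - 1) * ((p : K) - 1 - ∑ t ∈ Icc 1 (p - 1), (ζ ^ p ^ m) ^ t) /
        (p : K) ^ m) • w m := by
  have htop : ∑ m ∈ range (s - 1), ((ζ ^ p ^ (m + 1) - 1) / (p : K) ^ m) • w m =
      ∑ m ∈ range s, ((ζ ^ p ^ (m + 1) - 1) / (p : K) ^ m) • w m := by
    refine sum_subset (range_subset_range.mpr (Nat.sub_le s 1)) fun m hm hm' => ?_
    rw [show m + 1 = s by simp only [mem_range] at hm hm'; omega, hζ, sub_self, zero_div,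
      zero_smul]
  rw [htop, ← sum_sub_distrib]
  refine sum_congr rfl fun m _ => ?_
  rw [← Nat.cast_smul_eq_nsmul K, smul_smul, ← sub_smul, pow_succ, pow_mul,
    sub_one_mul_sub_sum_Icc_pow _ hp]
  congr 1
  ring

theorem EW_eq_expOf_sum_ghostComponent {p s : ℕ} [Fact p.Prime] {K : Type} [Field K]
    [CharZero K] (ζ : K) {σ : Type} {n r : ℕ} (hnr : n + r = s)
    (x : WittVector p (MvPowerSeries σ K))
    (hx : ∀ i, MvPowerSeries.constantCoeff (x.coeff i) = 0) :
    EW p s ζ n x = MvPowerSeries.expOf (∑ m ∈ range n,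
      ((ζ ^ p ^ (m + r) - 1) / (p : K) ^ m) • WittVector.ghostComponent m x) := by
  have hp : p ≠ 0 := (Fact.out : p.Prime).ne_zero
  rw [EW, ← WittVector.sum_sum_smul_pow_eq_sum_smul_ghostComponent x
    (fun m => ζ ^ p ^ (m + r) - 1), MvPowerSeries.expOf_sum _ (fun i _ => by simp [hx, hp])]
  refine prod_congr rfl fun i hi => ?_
  rw [Esingle, substOne_pexp_sum_monomial (hx i) (fun k => pow_ne_zero k hp)]
  congr 1
  refine sum_congr rfl fun k _ => ?_
  rw [show s - (n - i) + k = i + k + r by have := mem_range.mp hi; omega]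

theorem prod_substOne_X_pexp_eq_expOf_sum_ghostComponent {p s : ℕ} [Fact p.Prime] {K : Type}
    [Field K] [CharZero K] {x : WittVector p (MvPowerSeries ℕ K)}
    (hx : ∀ j < s, x.coeff j = MvPowerSeries.X j) (c : ℕ → K) :
    ∏ j ∈ range s, substOne (MvPowerSeries.X j : MvPowerSeries ℕ K)
        (pexp (∑ i ∈ range (s - j), monomial (p ^ i) (c (j + i) / (p : K) ^ i))) =
      MvPowerSeries.expOf (∑ m ∈ range s, (c m / (p : K) ^ m) • WittVector.ghostComponent m x) := by
  have hp : p ≠ 0 := (Fact.out : p.Prime).ne_zero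
  rw [← WittVector.sum_sum_smul_pow_eq_sum_smul_ghostComponent,
    MvPowerSeries.expOf_sum _ (fun j hj => by simp [hx j (mem_range.mp hj), hp])]
  refine prod_congr rfl fun j hj => ?_
  rw [substOne_pexp_sum_monomial (MvPowerSeries.constantCoeff_X j) (fun k => pow_ne_zero k hp),
    hx j (mem_range.mp hj)]

/-- The product formula
`G_{s,p}(a) = Π_{j<s} exp ( Σ_{i<s-j} (ζ_{p^{s-j-i}}-1)(p - 1 - ζ_{p^{s-j-i}} - ⋯ -
ζ_{p^{s-j-i}}^{p-1}) a_j^{p^i}/p^i )`, where `ζ_{p^{s-j-i}} = ζ^{p^{j+i}}`, as an identity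
of formal power series in the variables `a_0, …, a_{s-1}`. -/
theorem stmt_9 (p s : ℕ) [Fact p.Prime] (hs : 1 ≤ s) (K : Type) [Field K] [CharZero K]
    (ζ : K) (hζ : IsPrimitiveRoot ζ (p ^ s)) :
    ∀ a : WittVector p (MvPowerSeries ℕ K),
      a = WittVector.mk p (fun i => if i < s then MvPowerSeries.X i else 0) →
      GW p s ζ a =
        ∏ j ∈ Finset.range s,
          substOne (MvPowerSeries.X j : MvPowerSeries ℕ K)
            (pexp (∑ i ∈ Finset.range (s - j),
              (PowerSeries.monomial (p ^ i))
                ((ζ ^ p ^ (j + i) - 1) *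
                  ((p : K) - 1 - ∑ t ∈ Finset.Icc 1 (p - 1), (ζ ^ p ^ (j + i)) ^ t) /
                    ((p : K) ^ i)))) := by
  intro a ha
  have hX : ∀ j < s, a.coeff j = MvPowerSeries.X j := fun j hj => by
    rw [ha, WittVector.coeff_mk, if_pos hj]
  have hx : ∀ i, MvPowerSeries.constantCoeff (a.coeff i) = 0 := fun i => by
    rw [ha, WittVector.coeff_mk]
    split_ifs <;> simp
  have hw := WittVector.apply_ghostComponent_eq_zero _ hx
  rw [GW, EW_eq_expOf_sum_ghostComponent ζ (add_zero s) _
      (WittVector.apply_coeff_nsmul_eq_zero _ hx p),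
    EW_eq_expOf_sum_ghostComponent ζ (Nat.sub_add_cancel hs) _ hx,
    MvPowerSeries.inv_expOf (by simp [hw]), ← MvPowerSeries.expOf_add (by simp [hw]) (by simp [hw]),
    ← sub_eq_add_neg]
  refine (congrArg MvPowerSeries.expOf ?_).trans
    (prod_substOne_X_pexp_eq_expOf_sum_ghostComponent hX fun m =>
      (ζ ^ p ^ m - 1) * ((p : K) - 1 - ∑ t ∈ Icc 1 (p - 1), (ζ ^ p ^ m) ^ t)).symm
  simp only [add_zero, map_nsmul]
  exact sum_smul_nsmul_sub_sum_smul_eq_sum_smul (Fact.out : p.Prime).one_le hs hζ.pow_eq_one _
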